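/- Let X be an ordered vector space, (a_n) a sequence in X converging to a with respect to the sequential order topology τ_os(X), and (λ_n) a real sequence converging to λ. If the sequence ((1/n)·a) order converges to 0 in X, then (λ_n · a_n) converges to λ·a with respect to τ_os(X). -/

import Mathlib

/-- A net `x`, indexed by a set with relation `r`, *order converges* to `l` in a poset if it is
squeezed between an increasing net with supremum `l` and a decreasing net with infimum `l`. -/
def OrderConvNet {ι P : Type*} (r : ι → ι → Prop) [Preorder P] (x : ι → P) (l : P) : Prop :=
  ∃ y z : ι → P,
    (∀ i j, r i j → y i ≤ y j) ∧ (∀ i j, r i j → z j ≤ z i) ∧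
    (∀ i, y i ≤ x i ∧ x i ≤ z i) ∧
    IsLUB (Set.range y) l ∧ IsGLB (Set.range z) l

/-- Order convergence of a sequence in a poset. -/
def SeqOrderConv {P : Type*} [Preorder P] (x : ℕ → P) (l : P) : Prop :=
  OrderConvNet (· ≤ · : ℕ → ℕ → Prop) x l

/-- The sequential order topology `τ_os(P)`: the finest topology on `P` preserving order
convergence of sequences. -/
def seqOrderTop (P : Type*) [Preorder P] : TopologicalSpace P :=
  sInf {t : TopologicalSpace P | ∀ (x : ℕ → P) (l : P), SeqOrderConv x l →
    Filter.Tendsto x Filter.atTop (@nhds P t l)}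

/-!
A sequence that converges to `a` in `τ_os` has a subsequence order converging to `a`. Otherwise
pass to a subsequence avoiding `a` and then to one, `c`, with at most one subsequential order
limit; `range c` together with that limit is sequentially order closed, so its complement is a
`τ_os`-neighbourhood of `a` that `c` never enters.

Since `τ_os`-convergence can be tested on subsequences, it then suffices to show that
`λₙ aₙ → λ a` in order along a subsequence on which also `|λₙ - λ| ≤ 1/(n+1)`. There
`λₙ aₙ - λ a = λₙ (aₙ - a) + ((λₙ - λ)(n+1)) • (a/(n+1))`, a sum of two order null sequences
multiplied by bounded scalars.
-/

open Filter Set Topology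

theorem exists_comp_eq_comp_of_frequently_mem_range {α : Type*} {u c : ℕ → α}
    (hu : ∀ q, {n | u n = q}.Finite) (h : ∃ᶠ n in atTop, u n ∈ range c) :
    ∃ ψ χ : ℕ → ℕ, StrictMono ψ ∧ StrictMono χ ∧ u ∘ ψ = c ∘ χ := by
  obtain ⟨ψ, hψ, hψc⟩ := extraction_of_frequently_atTop h
  choose k hk using hψc
  have hk_top : Tendsto k atTop atTop := by
    rw [← Nat.cofinite_eq_atTop]
    refine Tendsto.cofinite_of_finite_preimage_singleton fun i => ?_
    refine ((hu (c i)).preimage hψ.injective.injOn).subset fun n hn => ?_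
    simp only [mem_preimage, mem_singleton_iff, mem_ofPred_eq] at hn ⊢
    rw [← hk, hn]
  obtain ⟨φ, hφ, hkφ⟩ := strictMono_subseq_of_tendsto_atTop hk_top
  exact ⟨ψ ∘ φ, k ∘ φ, hψ.comp hφ, hkφ, funext fun n => (hk (φ n)).symm⟩

theorem exists_strictMono_abs_sub_le_inv {μ : ℕ → ℝ} {ν : ℝ} (h : Tendsto μ atTop (𝓝 ν)) :
    ∃ φ : ℕ → ℕ, StrictMono φ ∧ ∀ n, |μ (φ n) - ν| ≤ ((n : ℝ) + 1)⁻¹ :=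
  extraction_forall_of_eventually fun n =>
    (h.eventually (Metric.closedBall_mem_nhds ν (by positivity))).mono fun k hk => hk

section Preorder

variable {P : Type*} [Preorder P]

theorem seqOrderConv_const (p : P) : SeqOrderConv (fun _ => p) p :=
  ⟨fun _ => p, fun _ => p, fun _ _ _ => le_rfl, fun _ _ _ => le_rfl, fun _ => ⟨le_rfl, le_rfl⟩,
    by simp, by simp⟩

theorem SeqOrderConv.comp_strictMono {x : ℕ → P} {l : P} (h : SeqOrderConv x l) {φ : ℕ → ℕ}
    (hφ : StrictMono φ) : SeqOrderConv (x ∘ φ) l := by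
  obtain ⟨y, z, hy, hz, hyz, hyl, hzl⟩ := h
  refine ⟨y ∘ φ, z ∘ φ, fun i j hij => hy _ _ (hφ.monotone hij),
    fun i j hij => hz _ _ (hφ.monotone hij), fun i => hyz (φ i), ⟨?_, ?_⟩, ⟨?_, ?_⟩⟩
  · exact fun _ ⟨i, hi⟩ => hi ▸ hyl.1 ⟨φ i, rfl⟩
  · refine fun b hb => hyl.2 ?_
    rintro _ ⟨i, rfl⟩
    exact (hy _ _ hφ.le_apply).trans (hb ⟨i, rfl⟩)
  · exact fun _ ⟨i, hi⟩ => hi ▸ hzl.1 ⟨φ i, rfl⟩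
  · refine fun b hb => hzl.2 ?_
    rintro _ ⟨i, rfl⟩
    exact (hb ⟨i, rfl⟩).trans (hz _ _ hφ.le_apply)

theorem SeqOrderConv.le {x : ℕ → P} {p q : P} (hp : SeqOrderConv x p) (hq : SeqOrderConv x q) :
    p ≤ q := by
  obtain ⟨y, _, hy, _, hyx, hyp, _⟩ := hp
  obtain ⟨_, z, _, hz, hxz, _, hzq⟩ := hq
  refine hzq.2 ?_
  rintro _ ⟨j, rfl⟩
  refine hyp.2 ?_
  rintro _ ⟨i, rfl⟩
  calc y i ≤ y (max i j) := hy _ _ (le_max_left i j)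
    _ ≤ x (max i j) := (hyx _).1
    _ ≤ z (max i j) := (hxz _).2
    _ ≤ z j := hz _ _ (le_max_right i j)

def subseqOrderLimits (c : ℕ → P) : Set P :=
  {p | ∃ φ : ℕ → ℕ, StrictMono φ ∧ SeqOrderConv (c ∘ φ) p}

theorem SeqOrderConv.tendsto_seqOrderTop {x : ℕ → P} {l : P} (h : SeqOrderConv x l) :
    Tendsto x atTop (@nhds P (seqOrderTop P) l) := by
  unfold seqOrderTop
  simp only [nhds_sInf, tendsto_iInf]
  exact fun t ht => ht x l h

theorem isOpen_seqOrderTop_of {U : Set P}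
    (hU : ∀ x l, SeqOrderConv x l → l ∈ U → ∀ᶠ n in atTop, x n ∈ U) : IsOpen[seqOrderTop P] U := by
  let t := TopologicalSpace.generateFrom
    {V : Set P | ∀ x l, SeqOrderConv x l → l ∈ V → ∀ᶠ n in atTop, x n ∈ V}
  have ht : seqOrderTop P ≤ t := sInf_le fun x l h =>
    TopologicalSpace.tendsto_nhds_generateFrom_iff.2 fun V hV hl => hV x l h hl
  exact ht U (TopologicalSpace.isOpen_generateFrom_of_mem hU)

theorem isClosed_seqOrderTop_of {E : Set P}
    (hE : ∀ x l, (∀ n, x n ∈ E) → SeqOrderConv x l → l ∈ E) :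
    IsClosed[seqOrderTop P] E := by
  let := seqOrderTop P
  refine ⟨isOpen_seqOrderTop_of fun x l hx hl => ?_⟩
  by_contra h
  obtain ⟨φ, hφ, hxφ⟩ := extraction_of_frequently_atTop (not_eventually.1 h)
  exact hl (hE _ l (fun n => not_not.1 (hxφ n)) (hx.comp_strictMono hφ))

end Preorder

section PartialOrder

variable {P : Type*} [PartialOrder P]

theorem SeqOrderConv.unique {x : ℕ → P} {p q : P} (hp : SeqOrderConv x p)
    (hq : SeqOrderConv x q) : p = q :=
  le_antisymm (hp.le hq) (hq.le hp)

theorem SeqOrderConv.eq_of_frequently_eq {x : ℕ → P} {p q : P} (hp : SeqOrderConv x p)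
    (hq : ∃ᶠ n in atTop, x n = q) : p = q := by
  obtain ⟨φ, hφ, hxφ⟩ := extraction_of_frequently_atTop hq
  have hconst : x ∘ φ = fun _ => q := funext hxφ
  exact (hp.comp_strictMono hφ).unique (hconst ▸ seqOrderConv_const q)

theorem exists_strictMono_subsingleton_subseqOrderLimits (c : ℕ → P) :
    ∃ φ : ℕ → ℕ, StrictMono φ ∧ (subseqOrderLimits (c ∘ φ)).Subsingleton := by
  by_cases h : (subseqOrderLimits c).Nonempty
  · obtain ⟨w, φ, hφ, hw⟩ := h
    refine ⟨φ, hφ, subsingleton_of_forall_eq w fun q ⟨ψ, hψ, hq⟩ => ?_⟩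
    exact hq.unique (hw.comp_strictMono hψ)
  · refine ⟨id, strictMono_id, ?_⟩
    rw [Function.comp_id, not_nonempty_iff_eq_empty.1 h]
    exact subsingleton_empty

theorem isClosed_range_union_subseqOrderLimits {c : ℕ → P}
    (hc : (subseqOrderLimits c).Subsingleton) :
    IsClosed[seqOrderTop P] (range c ∪ subseqOrderLimits c) := by
  refine isClosed_seqOrderTop_of fun u p hu hup => ?_
  -- A sequence in `range c ∪ subseqOrderLimits c` repeating no value meets the subsingleton
  -- `subseqOrderLimits c` only finitely often, so a subsequence of it is a subsequence of `c`.
  by_cases hrep : ∃ q, {n | u n = q}.Infinite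
  · obtain ⟨q, hq⟩ := hrep
    obtain ⟨n, rfl⟩ := hq.nonempty
    rw [hup.eq_of_frequently_eq (Nat.frequently_atTop_iff_infinite.2 hq)]
    exact hu n
  push Not at hrep
  have hS : ∀ᶠ n in atTop, u n ∉ subseqOrderLimits c := by
    rcases hc.eq_empty_or_singleton with h | ⟨w, h⟩ <;> rw [h]
    · simp
    · simpa [← Nat.cofinite_eq_atTop] using (hrep w).eventually_cofinite_notMem
  obtain ⟨ψ, χ, hψ, hχ, hu_eq⟩ := exists_comp_eq_comp_of_frequently_mem_range hrep
    (hS.mono fun n hn => (hu n).resolve_right hn).frequently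
  exact Or.inr ⟨χ, hχ, hu_eq ▸ hup.comp_strictMono hψ⟩

theorem exists_seqOrderConv_comp_of_tendsto {b : ℕ → P} {a : P}
    (h : Tendsto b atTop (@nhds P (seqOrderTop P) a)) :
    ∃ φ : ℕ → ℕ, StrictMono φ ∧ SeqOrderConv (b ∘ φ) a := by
  let := seqOrderTop P
  by_contra hno
  push Not at hno
  have hne : ∃ᶠ n in atTop, b n ≠ a := by
    refine fun hb => ?_
    obtain ⟨φ, hφ, hbφ⟩ := extraction_of_eventually_atTop (hb.mono fun n => not_not.1)
    have hconst : b ∘ φ = fun _ => a := funext hbφ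
    exact hno φ hφ (hconst ▸ seqOrderConv_const a)
  obtain ⟨θ, hθ, hθa⟩ := extraction_of_frequently_atTop hne
  obtain ⟨φ, hφ, hS⟩ := exists_strictMono_subsingleton_subseqOrderLimits (b ∘ θ)
  have haE : a ∉ range (b ∘ θ ∘ φ) ∪ subseqOrderLimits (b ∘ θ ∘ φ) := by
    rintro (⟨n, hn⟩ | ⟨ψ, hψ, hconv⟩)
    · exact hθa (φ n) hn
    · exact hno _ ((hθ.comp hφ).comp hψ) hconv
  have hev := h.eventually ((isClosed_range_union_subseqOrderLimits hS).isOpen_compl.mem_nhds haE)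
  obtain ⟨n, hn⟩ := ((hθ.comp hφ).tendsto_atTop.eventually hev).exists
  exact hn (Or.inl ⟨n, rfl⟩)

end PartialOrder

section OrderedAddCommGroup

variable {X : Type*} [AddCommGroup X] [PartialOrder X]

def DecreasesToZero (B : ℕ → X) : Prop :=
  Antitone B ∧ IsGLB (range B) 0

theorem DecreasesToZero.nonneg {B : ℕ → X} (hB : DecreasesToZero B) (n : ℕ) : 0 ≤ B n :=
  hB.2.1 ⟨n, rfl⟩

theorem DecreasesToZero.smul [Module ℝ X] [PosSMulMono ℝ X] {B : ℕ → X} (hB : DecreasesToZero B)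
    {c : ℝ} (hc : 0 ≤ c) : DecreasesToZero (c • B) := by
  refine ⟨fun i j hij => smul_le_smul_of_nonneg_left (hB.1 hij) hc, ?_, fun b hb => ?_⟩
  · rintro _ ⟨n, rfl⟩
    exact smul_nonneg hc (hB.nonneg n)
  rcases hc.eq_or_lt with rfl | hc
  · simpa using hb ⟨0, rfl⟩
  have : c⁻¹ • b ≤ 0 := hB.2.2 fun _ ⟨n, hn⟩ => hn ▸ (inv_smul_le_iff_of_pos hc).2 (hb ⟨n, rfl⟩)
  simpa [hc.ne'] using smul_le_smul_of_nonneg_left this hc.le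

variable [IsOrderedAddMonoid X]

theorem DecreasesToZero.add {B C : ℕ → X} (hB : DecreasesToZero B) (hC : DecreasesToZero C) :
    DecreasesToZero (B + C) := by
  refine ⟨hB.1.add hC.1, ?_, fun b hb => ?_⟩
  · rintro _ ⟨n, rfl⟩
    exact add_nonneg (hB.nonneg n) (hC.nonneg n)
  refine hC.2.2 ?_
  rintro _ ⟨j, rfl⟩
  suffices b - C j ≤ 0 from sub_nonpos.1 this
  refine hB.2.2 ?_
  rintro _ ⟨i, rfl⟩
  calc b - C j ≤ B (max i j) + C (max i j) - C j := sub_le_sub_right (hb ⟨max i j, rfl⟩) _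
    _ ≤ B i + C j - C j := by gcongr; exacts [hB.1 (le_max_left i j), hC.1 (le_max_right i j)]
    _ = B i := add_sub_cancel_right _ _

theorem seqOrderConv_iff_exists_decreasesToZero {x : ℕ → X} {p : X} :
    SeqOrderConv x p ↔ ∃ B, DecreasesToZero B ∧ ∀ n, p - B n ≤ x n ∧ x n ≤ p + B n := by
  constructor
  · rintro ⟨y, z, hy, hz, hyz, hyp, hzp⟩
    have hy_le : ∀ n, y n ≤ p := fun n => hyp.1 ⟨n, rfl⟩
    have hz_ge : ∀ n, p ≤ z n := fun n => hzp.1 ⟨n, rfl⟩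
    have hlow : DecreasesToZero (fun n => p - y n) := by
      refine ⟨fun i j hij => sub_le_sub_left (hy i j hij) p, ?_, fun b hb => ?_⟩
      · rintro _ ⟨n, rfl⟩
        exact sub_nonneg.2 (hy_le n)
      · have : p ≤ p - b := hyp.2 fun _ ⟨n, hn⟩ => hn ▸ le_sub_comm.1 (hb ⟨n, rfl⟩)
        simpa using this
    have hup : DecreasesToZero (fun n => z n - p) := by
      refine ⟨fun i j hij => sub_le_sub_right (hz i j hij) p, ?_, fun b hb => ?_⟩
      · rintro _ ⟨n, rfl⟩
        exact sub_nonneg.2 (hz_ge n)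
      · have : p + b ≤ p := hzp.2 fun _ ⟨n, hn⟩ => hn ▸ le_sub_iff_add_le'.1 (hb ⟨n, rfl⟩)
        simpa using this
    refine ⟨_, hlow.add hup, fun n => ⟨?_, ?_⟩⟩
    · calc p - ((p - y n) + (z n - p)) = y n - (z n - p) := by abel
        _ ≤ x n := (sub_le_self _ (sub_nonneg.2 (hz_ge n))).trans (hyz n).1
    · calc x n ≤ z n + (p - y n) :=
            (hyz n).2.trans (le_add_of_nonneg_right (sub_nonneg.2 (hy_le n)))
        _ = p + ((p - y n) + (z n - p)) := by abel
  · rintro ⟨B, hB, hxB⟩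
    refine ⟨fun n => p - B n, fun n => p + B n, fun i j hij => sub_le_sub_left (hB.1 hij) p,
      fun i j hij => add_le_add_right (hB.1 hij) p, hxB, ⟨?_, fun b hb => ?_⟩,
      ⟨?_, fun b hb => ?_⟩⟩
    · rintro _ ⟨n, rfl⟩
      exact sub_le_self p (hB.nonneg n)
    · exact sub_nonpos.1 (hB.2.2 fun _ ⟨n, hn⟩ => hn ▸ sub_le_comm.1 (hb ⟨n, rfl⟩))
    · rintro _ ⟨n, rfl⟩
      exact le_add_of_nonneg_right (hB.nonneg n)
    · exact sub_nonpos.1 (hB.2.2 fun _ ⟨n, hn⟩ => hn ▸ sub_le_iff_le_add'.2 (hb ⟨n, rfl⟩))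

theorem SeqOrderConv.add {x y : ℕ → X} {p q : X} (hx : SeqOrderConv x p) (hy : SeqOrderConv y q) :
    SeqOrderConv (fun n => x n + y n) (p + q) := by
  obtain ⟨B, hB, hxB⟩ := seqOrderConv_iff_exists_decreasesToZero.1 hx
  obtain ⟨C, hC, hyC⟩ := seqOrderConv_iff_exists_decreasesToZero.1 hy
  refine seqOrderConv_iff_exists_decreasesToZero.2 ⟨B + C, hB.add hC, fun n => ⟨?_, ?_⟩⟩
  · calc p + q - (B + C) n = (p - B n) + (q - C n) := by simp only [Pi.add_apply]; abel
      _ ≤ x n + y n := add_le_add (hxB n).1 (hyC n).1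
  · calc x n + y n ≤ (p + B n) + (q + C n) := add_le_add (hxB n).2 (hyC n).2
      _ = p + q + (B + C) n := by simp only [Pi.add_apply]; abel

theorem SeqOrderConv.sub_limit {x : ℕ → X} {p : X} (hx : SeqOrderConv x p) :
    SeqOrderConv (fun n => x n - p) 0 := by
  simpa [sub_eq_add_neg] using hx.add (seqOrderConv_const (-p))

variable [Module ℝ X] [PosSMulMono ℝ X]

theorem smul_le_smul_of_abs_le {s c : ℝ} {u B : X} (hs : |s| ≤ c) (hB : 0 ≤ B) (hu : -B ≤ u)
    (hu' : u ≤ B) : s • u ≤ c • B := by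
  rcases le_total 0 s with hs0 | hs0
  · calc s • u ≤ s • B := smul_le_smul_of_nonneg_left hu' hs0
      _ ≤ c • B := smul_le_smul_of_nonneg_right ((le_abs_self s).trans hs) hB
  · calc s • u = (-s) • (-u) := (neg_smul_neg s u).symm
      _ ≤ (-s) • B := smul_le_smul_of_nonneg_left (neg_le.1 hu) (neg_nonneg.2 hs0)
      _ ≤ c • B := smul_le_smul_of_nonneg_right ((neg_le_abs s).trans hs) hB

theorem SeqOrderConv.smul_of_abs_le {x : ℕ → X} {μ : ℕ → ℝ} {c : ℝ} (hx : SeqOrderConv x 0)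
    (hμ : ∀ n, |μ n| ≤ c) : SeqOrderConv (fun n => μ n • x n) 0 := by
  obtain ⟨B, hB, hxB⟩ := seqOrderConv_iff_exists_decreasesToZero.1 hx
  refine seqOrderConv_iff_exists_decreasesToZero.2
    ⟨c • B, hB.smul ((abs_nonneg _).trans (hμ 0)), fun n => ⟨?_, ?_⟩⟩
  · have := smul_le_smul_of_abs_le (s := -μ n) (abs_neg (μ n) ▸ hμ n) (hB.nonneg n)
      (by simpa using (hxB n).1) (by simpa using (hxB n).2)
    simpa [neg_le] using this
  · simpa using smul_le_smul_of_abs_le (hμ n) (hB.nonneg n)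
      (by simpa using (hxB n).1) (by simpa using (hxB n).2)

theorem SeqOrderConv.smul_of_abs_sub_le {x : ℕ → X} {p : X} {μ : ℕ → ℝ} {ν : ℝ}
    (hx : SeqOrderConv x p) (hp : SeqOrderConv (fun n : ℕ => ((n : ℝ) + 1)⁻¹ • p) 0)
    (hμ : ∀ n, |μ n - ν| ≤ ((n : ℝ) + 1)⁻¹) :
    SeqOrderConv (fun n => μ n • x n) (ν • p) := by
  have hn : ∀ n : ℕ, (0 : ℝ) < n + 1 := fun n => n.cast_add_one_pos
  have hμ_le : ∀ n, |μ n| ≤ 1 + |ν| := fun n => by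
    have := (hμ n).trans (inv_le_one_of_one_le₀ (by simp))
    linarith [abs_sub_abs_le_abs_sub (μ n) ν]
  have hscaled : ∀ n, |(μ n - ν) * ((n : ℝ) + 1)| ≤ 1 := fun n =>
    calc |(μ n - ν) * ((n : ℝ) + 1)| = |μ n - ν| * ((n : ℝ) + 1) := by
          rw [abs_mul, abs_of_pos (hn n)]
      _ ≤ ((n : ℝ) + 1)⁻¹ * ((n : ℝ) + 1) := by gcongr; exact hμ n
      _ = 1 := inv_mul_cancel₀ (hn n).ne'
  have := ((hx.sub_limit.smul_of_abs_le hμ_le).add (hp.smul_of_abs_le hscaled)).add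
    (seqOrderConv_const (ν • p))
  convert this using 2 with n
  · rw [smul_smul, mul_assoc, mul_inv_cancel₀ (hn n).ne', mul_one, smul_sub, sub_smul]
    abel
  · simp

end OrderedAddCommGroup

theorem stmt3_general {X : Type*} [AddCommGroup X] [PartialOrder X] [IsOrderedAddMonoid X] [Module ℝ X]
    [PosSMulStrictMono ℝ X]
    (a : X) (aN : ℕ → X) (lam : ℕ → ℝ) (l : ℝ)
    (ha : Filter.Tendsto aN Filter.atTop (@nhds X (seqOrderTop X) a))
    (hlam : Filter.Tendsto lam Filter.atTop (nhds l))
    (hsmall : SeqOrderConv (fun n : ℕ => ((n : ℝ) + 1)⁻¹ • a) 0) :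
    Filter.Tendsto (fun n => lam n • aN n) Filter.atTop (@nhds X (seqOrderTop X) (l • a)) := by
  refine tendsto_of_subseq_tendsto fun ns hns => ?_
  obtain ⟨φ, hφ, haφ⟩ := exists_seqOrderConv_comp_of_tendsto (ha.comp hns)
  obtain ⟨ψ, hψ, hlamψ⟩ :=
    exists_strictMono_abs_sub_le_inv ((hlam.comp hns).comp hφ.tendsto_atTop)
  exact ⟨φ ∘ ψ, ((haφ.comp_strictMono hψ).smul_of_abs_sub_le hsmall hlamψ).tendsto_seqOrderTop⟩

/-- In an ordered vector space, if `(1/n)·a` order converges to `0`, then scalar multiplication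
is compatible with convergence in the sequential order topology. -/
theorem stmt3 {X : Type*} [AddCommGroup X] [PartialOrder X] [IsOrderedAddMonoid X] [Module ℝ X]
    [PosSMulStrictMono ℝ X] [PosSMulReflectLT ℝ X]
    (a : X) (aN : ℕ → X) (lam : ℕ → ℝ) (l : ℝ)
    (ha : Filter.Tendsto aN Filter.atTop (@nhds X (seqOrderTop X) a))
    (hlam : Filter.Tendsto lam Filter.atTop (nhds l))
    (hsmall : SeqOrderConv (fun n : ℕ => ((n : ℝ) + 1)⁻¹ • a) 0) :
    Filter.Tendsto (fun n => lam n • aN n) Filter.atTop (@nhds X (seqOrderTop X) (l • a)) :=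
  stmt3_general a aN lam l ha hlam hsmall
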